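/- In the structure R₂, for every ordinal α: α ≤₁ α+1 if and only if α is a limit ordinal and for every ordinal β with β <₂ α the set {γ < α : β <₂ γ} is cofinal in α (that is, α is a proper supremum of <₂-successors of every <₂-predecessor of α). -/

import Mathlib

open Ordinal

noncomputable section

/-- The least epsilon number: the least fixed point of `ξ ↦ ω ^ ξ`. -/
def eps0 : Ordinal := sInf {ξ : Ordinal | Ordinal.omega0 ^ ξ = ξ}

namespace R2

/-- Terms of the language `{≤, ≤₁, ≤₂}`: existentially quantified variables,
universally quantified variables, and parameters (ordinal constants). -/
inductive Trm : Type 1 where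
  | evar : ℕ → Trm
  | avar : ℕ → Trm
  | cst  : Ordinal → Trm

def Trm.val (v w : ℕ → Ordinal) : Trm → Ordinal
  | .evar n => v n
  | .avar n => w n
  | .cst c  => c

/-- Quantifier-free formulas in the language `{≤, ≤₁, ≤₂}`. -/
inductive QF : Type 1 where
  | le  : Trm → Trm → QF
  | le1 : Trm → Trm → QF
  | le2 : Trm → Trm → QF
  | not : QF → QF
  | and : QF → QF → QF
  | or  : QF → QF → QF

def QF.eval (r1 r2 : Ordinal → Ordinal → Prop) (v w : ℕ → Ordinal) : QF → Prop
  | .le s t  => s.val v w ≤ t.val v w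
  | .le1 s t => r1 (s.val v w) (t.val v w)
  | .le2 s t => r2 (s.val v w) (t.val v w)
  | .not φ   => ¬ φ.eval r1 r2 v w
  | .and φ ψ => φ.eval r1 r2 v w ∧ ψ.eval r1 r2 v w
  | .or φ ψ  => φ.eval r1 r2 v w ∨ ψ.eval r1 r2 v w

def Trm.NoAvar : Trm → Prop
  | .avar _ => False
  | _ => True

def QF.NoAvar : QF → Prop
  | .le s t  => s.NoAvar ∧ t.NoAvar
  | .le1 s t => s.NoAvar ∧ t.NoAvar
  | .le2 s t => s.NoAvar ∧ t.NoAvar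
  | .not φ   => φ.NoAvar
  | .and φ ψ => φ.NoAvar ∧ ψ.NoAvar
  | .or φ ψ  => φ.NoAvar ∧ ψ.NoAvar

def Trm.CstBelow (δ : Ordinal) : Trm → Prop
  | .cst c => c < δ
  | _ => True

def QF.CstBelow (δ : Ordinal) : QF → Prop
  | .le s t  => s.CstBelow δ ∧ t.CstBelow δ
  | .le1 s t => s.CstBelow δ ∧ t.CstBelow δ
  | .le2 s t => s.CstBelow δ ∧ t.CstBelow δ
  | .not φ   => φ.CstBelow δ
  | .and φ ψ => φ.CstBelow δ ∧ ψ.CstBelow δ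
  | .or φ ψ  => φ.CstBelow δ ∧ ψ.CstBelow δ

/-- Satisfaction of a Σ₁-formula (an existential block in front of a
quantifier-free formula without universal variables) in the segment of
ordinals `< δ`, with the indicated interpretations of `≤₁` and `≤₂`. -/
def Sat1 (r1 r2 : Ordinal → Ordinal → Prop) (δ : Ordinal) (φ : QF) : Prop :=
  ∃ v : ℕ → Ordinal, (∀ n, v n < δ) ∧ φ.eval r1 r2 v v

/-- Satisfaction of a Σ₂-formula (a block of existential quantifiers followed
by a block of universal quantifiers in front of a quantifier-free formula) in
the segment of ordinals `< δ`. -/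
def Sat2 (r1 r2 : Ordinal → Ordinal → Prop) (δ : Ordinal) (φ : QF) : Prop :=
  ∃ v : ℕ → Ordinal, (∀ n, v n < δ) ∧
    ∀ w : ℕ → Ordinal, (∀ n, w n < δ) → φ.eval r1 r2 v w

/-- `(α; ≤, ≤₁, ≤₂)` is a Σ₁-elementary substructure of `(β; ≤, ≤₁, ≤₂)`:
Σ₁-sentences with parameters `< α` hold in `α` iff they hold in `β`. -/
def Sig1Elem (r1 r2 : Ordinal → Ordinal → Prop) (α β : Ordinal) : Prop :=
  ∀ φ : QF, φ.NoAvar → φ.CstBelow α → (Sat1 r1 r2 α φ ↔ Sat1 r1 r2 β φ)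

/-- `(α; ≤, ≤₁, ≤₂)` is a Σ₂-elementary substructure of `(β; ≤, ≤₁, ≤₂)`. -/
def Sig2Elem (r1 r2 : Ordinal → Ordinal → Prop) (α β : Ordinal) : Prop :=
  ∀ φ : QF, φ.CstBelow α → (Sat2 r1 r2 α φ ↔ Sat2 r1 r2 β φ)

/-- The simultaneous recursive (in `β`) definition of `α ≤₁ β` (`i = false`)
and `α ≤₂ β` (`i = true`): `α ≤ᵢ β` iff `α ≤ β` and `(α; ≤, ≤₁, ≤₂)` is a
Σᵢ-elementary substructure of `(β; ≤, ≤₁, ≤₂)`, where the relations `≤₁, ≤₂`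
are the restrictions to the segment below `β`, already defined by recursion. -/
noncomputable def leAux : Ordinal → Bool → Ordinal → Prop :=
  WellFounded.fix Ordinal.lt_wf fun β IH i α =>
    α ≤ β ∧
      (match i with
        | false => Sig1Elem
        | true  => Sig2Elem)
        (fun x y => ∃ h : y < β, IH y h false x)
        (fun x y => ∃ h : y < β, IH y h true x) α β

/-- `α ≤₁ β` in the structure `R₂`. -/
def le1 (α β : Ordinal) : Prop := leAux β false α

/-- `α ≤₂ β` in the structure `R₂`. -/
def le2 (α β : Ordinal) : Prop := leAux β true α

def lt1 (α β : Ordinal) : Prop := le1 α β ∧ α < β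

def lt2 (α β : Ordinal) : Prop := le2 α β ∧ α < β

/-- `h` is an isomorphism (w.r.t. `≤, ≤₁, ≤₂`) on the set `A`. -/
def IsoOn (h : Ordinal → Ordinal) (A : Set Ordinal) : Prop :=
  ∀ x ∈ A, ∀ y ∈ A,
    (x ≤ y ↔ h x ≤ h y) ∧ (le1 x y ↔ le1 (h x) (h y)) ∧ (le2 x y ↔ le2 (h x) (h y))

end R2

/-!
If `α <₁ β`, every Σ₁ property of `α` with parameters below `α` is shared by some ordinal below
`α`: being nonzero, exceeding a given `a < α`, and being a `<₂`-successor of a given `β` above a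
given `η`. This gives the forward direction.

Conversely, a Σ₁ formula true in `α + 1` uses `α` as at most one extra witness, and we replace it
by some `γ < α`. Σ₁ and Σ₂ truth in a segment is witnessed by finitely many ordinals, so below a
limit `α` the classes `{γ | x ≤ᵢ γ}` are closed; hence for each of the finitely many relevant
`x < α`, `x ≤ᵢ γ` implies `x ≤ᵢ α` for all large `γ < α`. In the other direction `x ≤₁ α` gives
`x ≤₁ γ` for every `γ ∈ [x, α]`, and the `<₂`-predecessors of `α` form a `≤₂`-chain, so applying
the hypothesis to the largest relevant one yields a large `γ` that is a `≤₂`-successor of all of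
them. Sending `α` to such a `γ` is then a partial isomorphism fixing the parameters.
-/

namespace R2

def Trm.csts : Trm → Finset Ordinal
  | .cst c => {c}
  | _ => ∅

def QF.csts : QF → Finset Ordinal
  | .le s t  => s.csts ∪ t.csts
  | .le1 s t => s.csts ∪ t.csts
  | .le2 s t => s.csts ∪ t.csts
  | .not φ   => φ.csts
  | .and φ ψ => φ.csts ∪ ψ.csts
  | .or φ ψ  => φ.csts ∪ ψ.csts

/-- One more than the largest variable index occurring in the term. -/
def Trm.maxVar : Trm → ℕ
  | .evar n => n + 1
  | .avar n => n + 1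
  | .cst _ => 0

def QF.maxVar : QF → ℕ
  | .le s t  => max s.maxVar t.maxVar
  | .le1 s t => max s.maxVar t.maxVar
  | .le2 s t => max s.maxVar t.maxVar
  | .not φ   => φ.maxVar
  | .and φ ψ => max φ.maxVar ψ.maxVar
  | .or φ ψ  => max φ.maxVar ψ.maxVar

def Trm.substEvar (v : ℕ → Ordinal) : Trm → Trm
  | .evar n => .cst (v n)
  | t => t

def QF.substEvar (v : ℕ → Ordinal) : QF → QF
  | .le s t  => .le (s.substEvar v) (t.substEvar v)
  | .le1 s t => .le1 (s.substEvar v) (t.substEvar v)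
  | .le2 s t => .le2 (s.substEvar v) (t.substEvar v)
  | .not φ   => .not (φ.substEvar v)
  | .and φ ψ => .and (φ.substEvar v) (ψ.substEvar v)
  | .or φ ψ  => .or (φ.substEvar v) (ψ.substEvar v)

def trunc (v : ℕ → Ordinal) (k n : ℕ) : Ordinal := if n < k then v n else 0

def CofinalIn (α : Ordinal) (P : Ordinal → Prop) : Prop :=
  ∀ η < α, ∃ γ, η < γ ∧ γ < α ∧ P γ

section Formulas

variable {r1 r2 r1' r2' : Ordinal → Ordinal → Prop} {δ : Ordinal} {v w v' w' : ℕ → Ordinal}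

theorem Trm.cstBelow_iff (t : Trm) : t.CstBelow δ ↔ ∀ c ∈ t.csts, c < δ := by
  cases t <;> simp [Trm.CstBelow, Trm.csts]

theorem QF.cstBelow_iff (φ : QF) : φ.CstBelow δ ↔ ∀ c ∈ φ.csts, c < δ := by
  induction φ <;> simp [QF.CstBelow, QF.csts, Trm.cstBelow_iff, or_imp, forall_and, *]

theorem QF.CstBelow.mono {φ : QF} {δ' : Ordinal} (hφ : φ.CstBelow δ) (h : δ ≤ δ') :
    φ.CstBelow δ' :=
  φ.cstBelow_iff.2 fun c hc => (φ.cstBelow_iff.1 hφ c hc).trans_le h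

theorem Trm.val_mem_and_val_comp {A : Set Ordinal} {h : Ordinal → Ordinal}
    (hv : ∀ n, v n ∈ A) (hw : ∀ n, w n ∈ A) (t : Trm) (ht : ∀ c ∈ t.csts, c ∈ A ∧ h c = c) :
    t.val v w ∈ A ∧ t.val (h ∘ v) (h ∘ w) = h (t.val v w) := by
  cases t with
  | evar n => exact ⟨hv n, rfl⟩
  | avar n => exact ⟨hw n, rfl⟩
  | cst c => exact (ht c (Finset.mem_singleton_self c)).imp_right Eq.symm

theorem QF.eval_congr {A : Set Ordinal} {h : Ordinal → Ordinal}
    (hh : ∀ x ∈ A, ∀ y ∈ A,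
      (x ≤ y ↔ h x ≤ h y) ∧ (r1 x y ↔ r1' (h x) (h y)) ∧ (r2 x y ↔ r2' (h x) (h y)))
    (hv : ∀ n, v n ∈ A) (hw : ∀ n, w n ∈ A) (φ : QF) (hφ : ∀ c ∈ φ.csts, c ∈ A ∧ h c = c) :
    φ.eval r1 r2 v w ↔ φ.eval r1' r2' (h ∘ v) (h ∘ w) := by
  induction φ with
  | le s t | le1 s t | le2 s t =>
    simp only [QF.csts, Finset.forall_mem_union] at hφ
    obtain ⟨hs, hs'⟩ := s.val_mem_and_val_comp hv hw hφ.1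
    obtain ⟨ht, ht'⟩ := t.val_mem_and_val_comp hv hw hφ.2
    simp only [QF.eval, hs', ht', hh _ hs _ ht]
  | not φ ih => simp only [QF.eval, ih hφ]
  | and φ ψ ihφ ihψ | or φ ψ ihφ ihψ =>
    simp only [QF.csts, Finset.forall_mem_union] at hφ
    simp only [QF.eval, ihφ hφ.1, ihψ hφ.2]

theorem QF.eval_congr_of_lt (hr : ∀ x < δ, ∀ y < δ, (r1 x y ↔ r1' x y) ∧ (r2 x y ↔ r2' x y))
    {φ : QF} (hφ : φ.CstBelow δ) (hv : ∀ n, v n < δ) (hw : ∀ n, w n < δ) :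
    φ.eval r1 r2 v w ↔ φ.eval r1' r2' v w :=
  QF.eval_congr (A := Set.Iio δ) (h := id) (fun x hx y hy => ⟨Iff.rfl, hr x hx y hy⟩) hv hw φ
    fun c hc => ⟨φ.cstBelow_iff.1 hφ c hc, rfl⟩

theorem QF.eval_ext (φ : QF) (hv : ∀ n < φ.maxVar, v n = v' n)
    (hw : ∀ n < φ.maxVar, w n = w' n) : φ.eval r1 r2 v w ↔ φ.eval r1 r2 v' w' := by
  induction φ with
  | le s t | le1 s t | le2 s t =>
    have hval : ∀ u : Trm, u.maxVar ≤ _ → u.val v w = u.val v' w' := fun u hu => by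
      cases u with
      | evar n => exact hv n (Nat.lt_of_succ_le hu)
      | avar n => exact hw n (Nat.lt_of_succ_le hu)
      | cst c => rfl
    simp only [QF.eval, hval s (le_max_left _ _), hval t (le_max_right _ _)]
  | not φ ih => simp only [QF.eval, ih hv hw]
  | and φ ψ ihφ ihψ | or φ ψ ihφ ihψ =>
    have hmax := fun n (h : n < _) => h.trans_le (le_max_left φ.maxVar ψ.maxVar)
    have hmax' := fun n (h : n < _) => h.trans_le (le_max_right φ.maxVar ψ.maxVar)
    simp only [QF.eval, ihφ (fun n h => hv n (hmax n h)) (fun n h => hw n (hmax n h)),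
      ihψ (fun n h => hv n (hmax' n h)) (fun n h => hw n (hmax' n h))]

theorem QF.eval_substEvar (φ : QF) : (φ.substEvar v).eval r1 r2 v' w ↔ φ.eval r1 r2 v w := by
  have hval : ∀ t : Trm, (t.substEvar v).val v' w = t.val v w := fun t => by cases t <;> rfl
  induction φ <;> simp only [QF.substEvar, QF.eval, *]

theorem QF.CstBelow.substEvar {φ : QF} (hφ : φ.CstBelow δ) (hv : ∀ n, v n < δ) :
    (φ.substEvar v).CstBelow δ := by
  have ht : ∀ t : Trm, t.CstBelow δ → (t.substEvar v).CstBelow δ := fun t h => by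
    cases t
    exacts [hv _, h, h]
  induction φ <;> simp_all [QF.substEvar, QF.CstBelow]

end Formulas

section Satisfaction

variable {r1 r2 r1' r2' : Ordinal → Ordinal → Prop} {δ : Ordinal} {v w : ℕ → Ordinal}

theorem trunc_of_lt {k n : ℕ} (h : n < k) : trunc v k n = v n := if_pos h

theorem exists_trunc_le (hδ : 0 < δ) (hv : ∀ n, v n < δ) (k : ℕ) :
    ∃ b < δ, ∀ n, trunc v k n ≤ b := by
  refine ⟨(Finset.range k).sup v, (Finset.sup_lt_iff hδ).2 fun n _ => hv n, fun n => ?_⟩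
  unfold trunc
  split_ifs with hn
  · exact Finset.le_sup (Finset.mem_range.2 hn)
  · exact zero_le

theorem QF.eval_trunc (φ : QF) :
    φ.eval r1 r2 (trunc v φ.maxVar) (trunc w φ.maxVar) ↔ φ.eval r1 r2 v w :=
  φ.eval_ext (fun _ => trunc_of_lt) (fun _ => trunc_of_lt)

theorem Sat1.mono {φ : QF} {δ' : Ordinal} (h : Sat1 r1 r2 δ φ) (hδ : δ ≤ δ') :
    Sat1 r1 r2 δ' φ :=
  let ⟨v, hv, hφ⟩ := h
  ⟨v, fun n => (hv n).trans_le hδ, hφ⟩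

theorem Sat1.exists_lt {φ : QF} (hδ : 0 < δ) (h : Sat1 r1 r2 δ φ) :
    ∃ b < δ, ∀ γ, b < γ → Sat1 r1 r2 γ φ := by
  obtain ⟨v, hv, hφ⟩ := h
  obtain ⟨b, hb, hvb⟩ := exists_trunc_le hδ hv φ.maxVar
  exact ⟨b, hb, fun γ hγ => ⟨_, fun n => (hvb n).trans_lt hγ, φ.eval_trunc.2 hφ⟩⟩

theorem Sat2.exists_lt {φ : QF} (hδ : 0 < δ) (h : Sat2 r1 r2 δ φ) :
    ∃ b < δ, ∀ γ, b < γ → γ ≤ δ → Sat2 r1 r2 γ φ := by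
  obtain ⟨v, hv, hφ⟩ := h
  obtain ⟨b, hb, hvb⟩ := exists_trunc_le hδ hv φ.maxVar
  refine ⟨b, hb, fun γ hγ hγδ => ⟨_, fun n => (hvb n).trans_lt hγ, fun w hw => ?_⟩⟩
  exact (φ.eval_ext (fun _ => trunc_of_lt) fun _ _ => rfl).2 (hφ w fun n => (hw n).trans_le hγδ)

theorem sat2_substEvar_iff {φ : QF} (hδ : 0 < δ) :
    Sat2 r1 r2 δ (φ.substEvar v) ↔ ∀ w, (∀ n, w n < δ) → φ.eval r1 r2 v w :=
  ⟨fun ⟨_, _, h⟩ w hw => φ.eval_substEvar.1 (h w hw),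
    fun h => ⟨fun _ => 0, fun _ => hδ, fun w hw => φ.eval_substEvar.2 (h w hw)⟩⟩

theorem sat1_congr (hr : ∀ x < δ, ∀ y < δ, (r1 x y ↔ r1' x y) ∧ (r2 x y ↔ r2' x y)) {φ : QF}
    (hφ : φ.CstBelow δ) : Sat1 r1 r2 δ φ ↔ Sat1 r1' r2' δ φ :=
  exists_congr fun _ => and_congr_right fun hv => QF.eval_congr_of_lt hr hφ hv hv

theorem sat2_congr (hr : ∀ x < δ, ∀ y < δ, (r1 x y ↔ r1' x y) ∧ (r2 x y ↔ r2' x y)) {φ : QF}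
    (hφ : φ.CstBelow δ) : Sat2 r1 r2 δ φ ↔ Sat2 r1' r2' δ φ :=
  exists_congr fun _ => and_congr_right fun hv =>
    forall₂_congr fun _ hw => QF.eval_congr_of_lt hr hφ hv hw

end Satisfaction

section Relations

variable {r1 r2 r1' r2' : Ordinal → Ordinal → Prop} {α β γ : Ordinal}

theorem sig1Elem_congr (hr : ∀ x, ∀ y < β, (r1 x y ↔ r1' x y) ∧ (r2 x y ↔ r2' x y))
    (hαβ : α ≤ β) : Sig1Elem r1 r2 α β ↔ Sig1Elem r1' r2' α β :=
  forall_congr' fun _ => imp_congr_right fun _ => imp_congr_right fun hφ => by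
    rw [sat1_congr (fun x _ y hy => hr x y (hy.trans_le hαβ)) hφ,
      sat1_congr (fun x _ y hy => hr x y hy) (hφ.mono hαβ)]

theorem sig2Elem_congr (hr : ∀ x, ∀ y < β, (r1 x y ↔ r1' x y) ∧ (r2 x y ↔ r2' x y))
    (hαβ : α ≤ β) : Sig2Elem r1 r2 α β ↔ Sig2Elem r1' r2' α β :=
  forall_congr' fun _ => imp_congr_right fun hφ => by
    rw [sat2_congr (fun x _ y hy => hr x y (hy.trans_le hαβ)) hφ,
      sat2_congr (fun x _ y hy => hr x y hy) (hφ.mono hαβ)]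

theorem le1_iff : le1 α β ↔ α ≤ β ∧ Sig1Elem le1 le2 α β := by
  rw [le1, leAux, WellFounded.fix_eq]
  exact and_congr_right fun hαβ => sig1Elem_congr
    (fun _ _ hy => ⟨exists_prop_of_true hy, exists_prop_of_true hy⟩) hαβ

theorem le2_iff : le2 α β ↔ α ≤ β ∧ Sig2Elem le1 le2 α β := by
  rw [le2, leAux, WellFounded.fix_eq]
  exact and_congr_right fun hαβ => sig2Elem_congr
    (fun _ _ hy => ⟨exists_prop_of_true hy, exists_prop_of_true hy⟩) hαβ

theorem le1.le (h : le1 α β) : α ≤ β := (le1_iff.1 h).1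

theorem le2.le (h : le2 α β) : α ≤ β := (le2_iff.1 h).1

theorem le1_refl (α : Ordinal) : le1 α α := le1_iff.2 ⟨le_rfl, fun _ _ _ => Iff.rfl⟩

theorem le2_refl (α : Ordinal) : le2 α α := le2_iff.2 ⟨le_rfl, fun _ _ => Iff.rfl⟩

theorem le2.trans (h : le2 α β) (h' : le2 β γ) : le2 α γ := by
  rw [le2_iff] at *
  exact ⟨h.1.trans h'.1, fun φ hφ => (h.2 φ hφ).trans (h'.2 φ (hφ.mono h.1))⟩

theorem le1.of_le_of_le (h : le1 α γ) (hαβ : α ≤ β) (hβγ : β ≤ γ) : le1 α β := by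
  rw [le1_iff] at *
  exact ⟨hαβ, fun φ hφ hφα =>
    ⟨fun hα => hα.mono hαβ, fun hβ => (h.2 φ hφ hφα).2 (hβ.mono hβγ)⟩⟩

theorem le2.of_le2_of_le (hαγ : le2 α γ) (hβγ : le2 β γ) (hαβ : α ≤ β) : le2 α β := by
  rw [le2_iff] at *
  exact ⟨hαβ, fun φ hφ => (hαγ.2 φ hφ).trans (hβγ.2 φ (hφ.mono hαβ)).symm⟩

end Relations

section Limit

variable {α x : Ordinal}

theorem le1_of_cofinalIn (hα : α ≠ 0) (h : CofinalIn α (le1 x)) : le1 x α := by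
  obtain ⟨γ₀, -, hγ₀α, hxγ₀⟩ := h 0 (pos_iff_ne_zero.2 hα)
  have hxα : x ≤ α := hxγ₀.le.trans hγ₀α.le
  refine le1_iff.2 ⟨hxα, fun φ hφ hφx => ⟨fun hx => hx.mono hxα, fun hsat => ?_⟩⟩
  obtain ⟨b, hb, hsat⟩ := hsat.exists_lt (pos_iff_ne_zero.2 hα)
  obtain ⟨γ, hbγ, -, hxγ⟩ := h b hb
  exact ((le1_iff.1 hxγ).2 φ hφ hφx).2 (hsat γ hbγ)

theorem le2_of_cofinalIn (hα : α ≠ 0) (h : CofinalIn α (le2 x)) : le2 x α := by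
  obtain ⟨γ₀, -, hγ₀α, hxγ₀⟩ := h 0 (pos_iff_ne_zero.2 hα)
  have hxα : x < α := hxγ₀.le.trans_lt hγ₀α
  refine le2_iff.2 ⟨hxα.le, fun φ hφ => ⟨fun ⟨v, hv, hvx⟩ => ?_, fun hsat => ?_⟩⟩
  · -- the witnesses `v` become parameters, so that `x ≤₂ γ` transfers the universal part alone
    have hx : 0 < x := zero_le.trans_lt (hv 0)
    refine ⟨v, fun n => (hv n).trans hxα, fun w hw => ?_⟩
    obtain ⟨b, hb, hwb⟩ := exists_trunc_le (pos_iff_ne_zero.2 hα) hw φ.maxVar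
    obtain ⟨γ, hγ, -, hxγ⟩ := h (max b x) (max_lt hb hxα)
    have hγ' : Sat2 le1 le2 γ (φ.substEvar v) :=
      ((le2_iff.1 hxγ).2 _ (hφ.substEvar hv)).1 ((sat2_substEvar_iff hx).2 hvx)
    refine (φ.eval_ext (fun _ _ => rfl) fun _ => trunc_of_lt).1 ?_
    exact (sat2_substEvar_iff (hx.trans (le_max_right b x |>.trans_lt hγ))).1 hγ' _
      fun n => (hwb n).trans_lt ((le_max_left b x).trans_lt hγ)
  · obtain ⟨b, hb, hsat⟩ := hsat.exists_lt (pos_iff_ne_zero.2 hα)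
    obtain ⟨γ, hbγ, hγα, hxγ⟩ := h b hb
    exact ((le2_iff.1 hxγ).2 φ hφ).2 (hsat γ hbγ hγα.le)

theorem exists_forall_le1_imp (hα : α ≠ 0) (x : Ordinal) :
    ∃ η < α, ∀ γ, η < γ → γ < α → le1 x γ → le1 x α := by
  by_contra! h
  obtain ⟨-, -, -, -, hx⟩ := h 0 (pos_iff_ne_zero.2 hα)
  exact hx (le1_of_cofinalIn hα fun η hη =>
    let ⟨γ, hηγ, hγα, hxγ, _⟩ := h η hη
    ⟨γ, hηγ, hγα, hxγ⟩)

theorem exists_forall_le2_imp (hα : α ≠ 0) (x : Ordinal) :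
    ∃ η < α, ∀ γ, η < γ → γ < α → le2 x γ → le2 x α := by
  by_contra! h
  obtain ⟨-, -, -, -, hx⟩ := h 0 (pos_iff_ne_zero.2 hα)
  exact hx (le2_of_cofinalIn hα fun η hη =>
    let ⟨γ, hηγ, hγα, hxγ, _⟩ := h η hη
    ⟨γ, hηγ, hγα, hxγ⟩)

end Limit

section Reflection

variable {α β γ : Ordinal}

theorem cofinalIn_forall_le2 (hα : Order.IsSuccLimit α)
    (hcof : ∀ β, lt2 β α → CofinalIn α (lt2 β)) (X : Finset Ordinal) (hX : ∀ x ∈ X, lt2 x α) :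
    CofinalIn α fun γ => ∀ x ∈ X, le2 x γ := by
  intro η hη
  rcases X.eq_empty_or_nonempty with rfl | hne
  · exact ⟨Order.succ η, Order.lt_succ η, hα.succ_lt hη, by simp⟩
  · have hmax := hX _ (X.max'_mem hne)
    obtain ⟨γ, hηγ, hγα, hγ⟩ := hcof _ hmax η hη
    exact ⟨γ, hηγ, hγα, fun x hx =>
      ((hX x hx).1.of_le2_of_le hmax.1 (X.le_max' x hx)).trans hγ.1⟩

theorem exists_lt_le1_iff_le2_iff (hα : Order.IsSuccLimit α)
    (hcof : ∀ β, lt2 β α → CofinalIn α (lt2 β)) (X : Finset Ordinal) (hX : ∀ x ∈ X, x < α) :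
    ∃ γ < α, ∀ x ∈ X, x < γ ∧ (le1 x α ↔ le1 x γ) ∧ (le2 x α ↔ le2 x γ) := by
  classical
  have hbound : ∀ x ∈ X, ∃ η < α, x ≤ η ∧
      ∀ γ, η < γ → γ < α → (le1 x γ → le1 x α) ∧ (le2 x γ → le2 x α) := fun x hx => by
    obtain ⟨η₁, hη₁, h₁⟩ := exists_forall_le1_imp hα.ne_bot x
    obtain ⟨η₂, hη₂, h₂⟩ := exists_forall_le2_imp hα.ne_bot x
    refine ⟨max x (max η₁ η₂), max_lt (hX x hx) (max_lt hη₁ hη₂), le_max_left _ _,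
      fun γ hγ hγα => ⟨h₁ γ (lt_of_le_of_lt ?_ hγ) hγα, h₂ γ (lt_of_le_of_lt ?_ hγ) hγα⟩⟩
    exacts [(le_max_left η₁ η₂).trans (le_max_right x _),
      (le_max_right η₁ η₂).trans (le_max_right x _)]
  choose! f hfα hxf hf using hbound
  obtain ⟨γ, hγ, hγα, hle2⟩ := cofinalIn_forall_le2 hα hcof (X.filter (le2 · α))
    (fun x hx => ⟨(Finset.mem_filter.1 hx).2, hX x (Finset.mem_filter.1 hx).1⟩)
    (X.sup f) ((Finset.sup_lt_iff hα.bot_lt).2 hfα)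
  refine ⟨γ, hγα, fun x hx => ?_⟩
  have hfγ : f x < γ := (X.le_sup hx).trans_lt hγ
  have hxγ : x < γ := (hxf x hx).trans_lt hfγ
  exact ⟨hxγ, ⟨fun h => h.of_le_of_le hxγ.le hγα.le, (hf x hx γ hfγ hγα).1⟩,
    ⟨fun h => hle2 x (Finset.mem_filter.2 ⟨hx, h⟩), (hf x hx γ hfγ hγα).2⟩⟩

theorem isoOn_insert_replace {X : Set Ordinal} (hX : ∀ x ∈ X, x < γ) (hγα : γ ≤ α)
    (hrel : ∀ x ∈ X, (le1 x α ↔ le1 x γ) ∧ (le2 x α ↔ le2 x γ)) :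
    IsoOn (fun x => if x = α then γ else x) (insert α X) := by
  have hne : ∀ x ∈ X, x ≠ α := fun x hx => ((hX x hx).trans_le hγα).ne
  rintro x (rfl | hx) y (rfl | hy)
  · exact ⟨iff_of_true le_rfl le_rfl, iff_of_true (le1_refl _) (le1_refl _),
      iff_of_true (le2_refl _) (le2_refl _)⟩
  · have hyx := (hX y hy).trans_le hγα
    simp only [if_neg (hne y hy)]
    exact ⟨iff_of_false hyx.not_ge (hX y hy).not_ge,
      iff_of_false (fun h => hyx.not_ge h.le) (fun h => (hX y hy).not_ge h.le),
      iff_of_false (fun h => hyx.not_ge h.le) (fun h => (hX y hy).not_ge h.le)⟩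
  · simp only [if_neg (hne x hx)]
    exact ⟨iff_of_true ((hX x hx).le.trans hγα) (hX x hx).le, hrel x hx⟩
  · simp only [if_neg (hne x hx), if_neg (hne y hy), iff_self, and_self]

theorem le1_succ_of_cofinalIn (hα : Order.IsSuccLimit α)
    (hcof : ∀ β, lt2 β α → CofinalIn α (lt2 β)) : le1 α (α + 1) := by
  classical
  refine le1_iff.2 ⟨le_self_add, fun φ hφ hφα => ⟨fun h => h.mono le_self_add, ?_⟩⟩
  rintro ⟨v, hv, hφv⟩
  set X := (insert 0 ((Finset.range φ.maxVar).image v ∪ φ.csts)).filter (· < α)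
  obtain ⟨γ, hγα, hγ⟩ := exists_lt_le1_iff_le2_iff hα hcof X fun x hx => (Finset.mem_filter.1 hx).2
  have hiso := isoOn_insert_replace (X := ↑X) (fun x hx => (hγ x hx).1) hγα.le
    fun x hx => (hγ x hx).2
  have hmem : ∀ n, trunc v φ.maxVar n ∈ insert α (X : Set Ordinal) := fun n => by
    unfold trunc
    split_ifs with hn
    · rcases (Order.le_of_lt_add_one (hv n)).eq_or_lt with hvn | hvn
      · exact Or.inl hvn
      · refine Or.inr (Finset.mem_filter.2 ⟨?_, hvn⟩)
        exact Finset.mem_insert_of_mem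
          (Finset.mem_union_left _ (Finset.mem_image_of_mem v (Finset.mem_range.2 hn)))
    · exact Or.inr (Finset.mem_filter.2 ⟨by simp, hα.bot_lt⟩)
  have hcst : ∀ c ∈ φ.csts, c ∈ insert α (X : Set Ordinal) ∧ (if c = α then γ else c) = c :=
    fun c hc => by
      have hcα := φ.cstBelow_iff.1 hφα c hc
      exact ⟨Or.inr (Finset.mem_filter.2 ⟨by simp [hc], hcα⟩), if_neg hcα.ne⟩
  refine ⟨_, fun n => ?_, (QF.eval_congr hiso hmem hmem φ hcst).1 (φ.eval_trunc.2 hφv)⟩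
  rcases hmem n with h | h
  · simp [h, hγα]
  · have hlt := (Finset.mem_filter.1 h).2
    simp [hlt, hlt.ne]

end Reflection

section Downward

variable {α β γ : Ordinal}

theorem lt1.sat1_of_eval (h : lt1 α β) {φ : QF} (hφ : φ.NoAvar) (hφα : φ.CstBelow α)
    (hα : φ.eval le1 le2 (fun _ => α) (fun _ => α)) : Sat1 le1 le2 α φ :=
  ((le1_iff.1 h.1).2 φ hφ hφα).2 ⟨_, fun _ => h.2, hα⟩

theorem lt1.isSuccLimit (h : lt1 α β) : Order.IsSuccLimit α := by
  refine isSuccLimit_iff.2 ⟨?_, Order.isSuccPrelimit_iff_succ_lt.2 fun a ha => ?_⟩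
  · obtain ⟨v, hv, -⟩ := h.sat1_of_eval (φ := .le (.evar 0) (.evar 0)) ⟨trivial, trivial⟩
      ⟨trivial, trivial⟩ le_rfl
    exact (pos_of_gt (hv 0)).ne'
  · obtain ⟨v, hv, hva⟩ := h.sat1_of_eval (φ := .not (.le (.evar 0) (.cst a))) ⟨trivial, trivial⟩
      ⟨trivial, ha⟩ ha.not_ge
    exact (Order.succ_le_of_lt (not_le.1 hva)).trans_lt (hv 0)

theorem lt1.cofinalIn_lt2 (h : lt1 α β) (hγ : lt2 γ α) : CofinalIn α (lt2 γ) := fun η hη => by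
  obtain ⟨v, hv, ⟨hηv, hγv⟩, hvγ⟩ := h.sat1_of_eval
    (φ := .and (.and (.not (.le (.evar 0) (.cst η))) (.le2 (.cst γ) (.evar 0)))
      (.not (.le (.evar 0) (.cst γ))))
    ⟨⟨⟨trivial, trivial⟩, trivial, trivial⟩, trivial, trivial⟩
    ⟨⟨⟨trivial, hη⟩, hγ.2, trivial⟩, trivial, hγ.2⟩ ⟨⟨hη.not_ge, hγ.1⟩, hγ.2.not_ge⟩
  exact ⟨v 0, not_le.1 hηv, hv 0, hγv, not_le.1 hvγ⟩

end Downward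

end R2

/-- In `R₂`: `α ≤₁ α+1` iff `α` is a limit ordinal and `α` is a proper
supremum of `<₂`-successors of every `<₂`-predecessor of `α`. -/
theorem le1_succ_iff (α : Ordinal) :
    R2.le1 α (α + 1) ↔
      Order.IsSuccLimit α ∧
        ∀ β : Ordinal, R2.lt2 β α →
          ∀ η < α, ∃ γ, η < γ ∧ γ < α ∧ R2.lt2 β γ := by
  refine ⟨fun h => ?_, fun ⟨hα, hcof⟩ => R2.le1_succ_of_cofinalIn hα hcof⟩
  have hlt : R2.lt1 α (α + 1) := ⟨h, Order.lt_add_one_iff.2 le_rfl⟩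
  exact ⟨hlt.isSuccLimit, fun β hβ => hlt.cofinalIn_lt2 hβ⟩
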